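/- arXiv:1211.1123 — 2 statements merged into one kernel-verified Lean document; each statement's English description precedes it below -/
import Mathlib

section
/- Multiplier identity at KKT points: Under assumptions (H1) and (H2), suppose x ∈ S and λ ∈ ℝ^m, μ ∈ ℝ^k with μ ≥ 0 satisfy (∇θ(x))ᵀ + A(x)ᵀλ + B(x)ᵀμ = 0 and μᵀg(x) = 0. Then diag(g(x))μ = 0, v(x) = −μ, and consequently (v(x))⁺ = 0. -/
open Matrix Set Filter

noncomputable section

/-- The gradient of `f : ℝⁿ → ℝ` at `x`, as the vector of partial derivatives. -/
def grad {n : ℕ} (f : (Fin n → ℝ) → ℝ) (x : Fin n → ℝ) : Fin n → ℝ :=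
  fun j => fderiv ℝ f x (Pi.single j 1)

/-- The feasible set `S`. -/
def feas {n m k : ℕ} (h : Fin m → (Fin n → ℝ) → ℝ) (g : Fin k → (Fin n → ℝ) → ℝ) :
    Set (Fin n → ℝ) :=
  {x | (∀ i, h i x = 0) ∧ (∀ j, g j x ≤ 0)}

/-- Jacobian of the equality constraints (rows `∇h_i(x)`). -/
def matA {n m : ℕ} (h : Fin m → (Fin n → ℝ) → ℝ) (x : Fin n → ℝ) :
    Matrix (Fin m) (Fin n) ℝ :=
  Matrix.of fun i => grad (h i) x

/-- Jacobian of the inequality constraints (rows `∇g_j(x)`). -/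
def matB {n k : ℕ} (g : Fin k → (Fin n → ℝ) → ℝ) (x : Fin n → ℝ) :
    Matrix (Fin k) (Fin n) ℝ :=
  Matrix.of fun j => grad (g j) x

/-- `H(x) = I − Aᵀ(AAᵀ)⁻¹A`. -/
def matH {n m : ℕ} (h : Fin m → (Fin n → ℝ) → ℝ) (x : Fin n → ℝ) :
    Matrix (Fin n) (Fin n) ℝ :=
  1 - (matA h x)ᵀ * (matA h x * (matA h x)ᵀ)⁻¹ * matA h x

/-- `Q(x) = B(x)H(x)B(x)ᵀ − diag(g(x))`. -/
def matQ {n m k : ℕ} (h : Fin m → (Fin n → ℝ) → ℝ) (g : Fin k → (Fin n → ℝ) → ℝ)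
    (x : Fin n → ℝ) : Matrix (Fin k) (Fin k) ℝ :=
  matB g x * matH h x * (matB g x)ᵀ - Matrix.diagonal (fun j => g j x)

/-- Assumption (H1). -/
def hypH1 {n m k : ℕ} (θ : (Fin n → ℝ) → ℝ) (h : Fin m → (Fin n → ℝ) → ℝ)
    (g : Fin k → (Fin n → ℝ) → ℝ) : Prop :=
  (feas h g).Nonempty ∧ ∀ x₀ ∈ feas h g, IsCompact {x ∈ feas h g | θ x ≤ θ x₀}

/-- Assumption (H2). -/
def hypH2 {n m k : ℕ} (h : Fin m → (Fin n → ℝ) → ℝ) (g : Fin k → (Fin n → ℝ) → ℝ) : Prop :=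
  ∀ x ∈ feas h g,
    LinearIndependent ℝ
      (Sum.elim (fun i : Fin m => grad (h i) x)
        (fun j : {j : Fin k // g j x = 0} => grad (g (j : Fin k)) x))

/-- `P(x) = Q(x)⁻¹ B(x) H(x)`. -/
def matP {n m k : ℕ} (h : Fin m → (Fin n → ℝ) → ℝ) (g : Fin k → (Fin n → ℝ) → ℝ)
    (x : Fin n → ℝ) : Matrix (Fin k) (Fin n) ℝ :=
  (matQ h g x)⁻¹ * matB g x * matH h x

/-- `v(x) = P(x)(∇θ(x))ᵀ`. -/
def vecv {n m k : ℕ} (θ : (Fin n → ℝ) → ℝ) (h : Fin m → (Fin n → ℝ) → ℝ)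
    (g : Fin k → (Fin n → ℝ) → ℝ) (x : Fin n → ℝ) : Fin k → ℝ :=
  (matP h g x).mulVec (grad θ x)

/-- componentwise positive part. -/
def pPart {k : ℕ} (w : Fin k → ℝ) : Fin k → ℝ := fun j => max 0 (w j)

/-- `R₃(x)`. -/
def matR3 {n k : ℕ} (b c : Fin k → (Fin n → ℝ) → ℝ) (p : Fin k → ℕ) (x : Fin n → ℝ)
    (v : Fin k → ℝ) : Matrix (Fin k) (Fin k) ℝ :=
  Matrix.diagonal (fun j => b j x + c j x * (max 0 (v j)) ^ (2 * p j))

/-- The vector field `F(x)` of (2.4), (2.5). -/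
def vecF {n m k : ℕ} (θ : (Fin n → ℝ) → ℝ) (h : Fin m → (Fin n → ℝ) → ℝ)
    (g : Fin k → (Fin n → ℝ) → ℝ)
    (R1 : (Fin n → ℝ) → Matrix (Fin n) (Fin n) ℝ)
    (R2 : (Fin n → ℝ) → Matrix (Fin k) (Fin k) ℝ)
    (a b c : Fin k → (Fin n → ℝ) → ℝ) (p : Fin k → ℕ) (x : Fin n → ℝ) : Fin n → ℝ :=
  -(((matH h x - (matP h g x)ᵀ * matQ h g x * matP h g x) * R1 x *
      (matH h x - (matP h g x)ᵀ * matQ h g x * matP h g x)).mulVec (grad θ x))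
  - ((matP h g x)ᵀ * Matrix.diagonal (fun j => g j x) *
      (R2 x * Matrix.diagonal (fun j => g j x) - Matrix.diagonal (fun j => a j x))).mulVec
        (vecv θ h g x)
  - ((matP h g x)ᵀ * matR3 b c p x (vecv θ h g x)).mulVec (pPart (vecv θ h g x))

/-- The set `Φ` of KKT points. -/
def KKTset {n m k : ℕ} (θ : (Fin n → ℝ) → ℝ) (h : Fin m → (Fin n → ℝ) → ℝ)
    (g : Fin k → (Fin n → ℝ) → ℝ) : Set (Fin n → ℝ) :=
  {x | x ∈ feas h g ∧ ∃ (lam : Fin m → ℝ) (mu : Fin k → ℝ),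
    (∀ j, 0 ≤ mu j) ∧
    grad θ x + (∑ i, lam i • grad (h i) x) + (∑ j, mu j • grad (g j) x) = 0 ∧
    (∑ j, mu j * g j x) = 0}

/-!
Complementary slackness with `μ ≥ 0` and `g(x) ≤ 0` gives `g_j(x) μ_j = 0`, so
`diag(g(x)) μ = 0` and `Q(x) μ = B H Bᵀ μ`. As `H` is the orthogonal projection onto `ker A(x)`,
`H Aᵀ = 0`, and multiplying the KKT equation by `B H` gives `B H ∇θ = -B H Bᵀ μ = -Q μ`.
By (H2), `Q(x)` is positive definite: `uᵀ Q u = 0` forces `H Bᵀ u = 0`, i.e. `Bᵀ u` lies in the row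
space of `A`, and `u_j = 0` for every inactive `j`; linear independence of the gradients of the
active constraints then gives `u = 0`. Hence `v(x) = Q⁻¹ B H ∇θ = -μ ≤ 0`.
-/

namespace Matrix

variable {m n k : Type*} [Fintype m]

theorem eq_zero_of_transpose_mulVec_eq [Fintype k] {A : Matrix m n ℝ} {B : Matrix k n ℝ}
    {p : k → Prop}
    (hAB : LinearIndependent ℝ (Sum.elim A.row (fun j : {j // p j} => B.row j)))
    {u : k → ℝ} (hu : ∀ j, ¬ p j → u j = 0) {c : m → ℝ} (hBA : Bᵀ *ᵥ u = Aᵀ *ᵥ c) :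
    u = 0 := by
  classical
  have hsupp : ∑ j : {j // p j}, u j • B j = ∑ j, u j • B j := by
    rw [← Fintype.sum_subtype_add_sum_subtype p (fun j => u j • B j), left_eq_add]
    exact Finset.sum_eq_zero fun j _ => by rw [hu j j.2, zero_smul]
  have hcoeff := Fintype.linearIndependent_iff.mp hAB (Sum.elim (-c) fun j => u j) (by
    rw [Fintype.sum_sum_type]
    simp only [Sum.elim_inl, Sum.elim_inr, row_def, Pi.neg_apply, neg_smul, Finset.sum_neg_distrib]
    rw [hsupp, ← vecMul_eq_sum, ← vecMul_eq_sum, ← mulVec_transpose, ← mulVec_transpose, hBA,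
      neg_add_cancel])
  funext j
  by_cases hj : p j
  · exact hcoeff (Sum.inr ⟨j, hj⟩)
  · exact hu j hj

variable [Fintype n] [DecidableEq m]

theorem isUnit_det_mul_transpose_of_linearIndependent {A : Matrix m n ℝ}
    (hA : LinearIndependent ℝ A.row) : IsUnit (A * Aᵀ).det := by
  rw [← isUnit_iff_isUnit_det, ← conjTranspose_eq_transpose_of_trivial]
  exact (PosDef.mul_conjTranspose_self A (vecMul_injective_iff.mpr hA)).isUnit

variable [DecidableEq n]

/-- The orthogonal projection onto `ker A`; `matH h x` is `kerProj (matA h x)`. -/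
def kerProj (A : Matrix m n ℝ) : Matrix n n ℝ :=
  1 - Aᵀ * (A * Aᵀ)⁻¹ * A

theorem kerProj_mul_transpose {A : Matrix m n ℝ} (hA : IsUnit (A * Aᵀ).det) :
    kerProj A * Aᵀ = 0 := by
  rw [kerProj, Matrix.sub_mul, Matrix.one_mul, Matrix.mul_assoc _ A, Matrix.mul_assoc,
    nonsing_inv_mul _ hA, Matrix.mul_one, sub_self]

theorem transpose_kerProj (A : Matrix m n ℝ) : (kerProj A)ᵀ = kerProj A := by
  rw [kerProj, transpose_sub, transpose_one, transpose_mul, transpose_mul, transpose_transpose,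
    transpose_nonsing_inv, transpose_mul, transpose_transpose, Matrix.mul_assoc]

theorem kerProj_mul_kerProj {A : Matrix m n ℝ} (hA : IsUnit (A * Aᵀ).det) :
    kerProj A * kerProj A = kerProj A := by
  nth_rw 2 [kerProj]
  rw [Matrix.mul_sub, Matrix.mul_one, Matrix.mul_assoc Aᵀ, ← Matrix.mul_assoc (kerProj A),
    kerProj_mul_transpose hA, Matrix.zero_mul, sub_zero]

theorem eq_transpose_mulVec_of_kerProj_mulVec_eq_zero {A : Matrix m n ℝ} {w : n → ℝ}
    (hw : kerProj A *ᵥ w = 0) : ∃ c, w = Aᵀ *ᵥ c := by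
  refine ⟨((A * Aᵀ)⁻¹ * A) *ᵥ w, ?_⟩
  rw [kerProj, sub_mulVec, one_mulVec, sub_eq_zero] at hw
  rwa [mulVec_mulVec, ← Matrix.mul_assoc]

theorem mul_kerProj_mul_transpose {A : Matrix m n ℝ} (hA : IsUnit (A * Aᵀ).det)
    (B : Matrix k n ℝ) :
    B * kerProj A * Bᵀ = (kerProj A * Bᵀ)ᴴ * (kerProj A * Bᵀ) := by
  rw [conjTranspose_eq_transpose_of_trivial, transpose_mul, transpose_transpose,
    transpose_kerProj]
  conv_rhs => rw [← Matrix.mul_assoc, Matrix.mul_assoc B, kerProj_mul_kerProj hA]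

theorem posDef_mul_kerProj_mul_transpose_sub_diagonal [Fintype k] [DecidableEq k]
    {A : Matrix m n ℝ} {B : Matrix k n ℝ} {d : k → ℝ} (hd : ∀ j, d j ≤ 0)
    (hAB : LinearIndependent ℝ (Sum.elim A.row (fun j : {j // d j = 0} => B.row j))) :
    (B * kerProj A * Bᵀ - diagonal d).PosDef := by
  have hA : IsUnit (A * Aᵀ).det :=
    isUnit_det_mul_transpose_of_linearIndependent (hAB.comp Sum.inl Sum.inl_injective)
  have hS : (B * kerProj A * Bᵀ).PosSemidef := by
    rw [mul_kerProj_mul_transpose hA]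
    exact posSemidef_conjTranspose_mul_self _
  have hD : (diagonal fun j => -d j).PosSemidef := PosSemidef.diagonal fun j => neg_nonneg.mpr (hd j)
  rw [sub_eq_add_neg, diagonal_neg]
  refine PosDef.of_dotProduct_mulVec_pos (hS.add hD).isHermitian fun u hu => ?_
  refine ((hS.add hD).dotProduct_mulVec_nonneg u).lt_of_ne' fun h0 => hu ?_
  rw [add_mulVec, dotProduct_add] at h0
  have hS0 := hS.dotProduct_mulVec_nonneg u
  have hD0 := hD.dotProduct_mulVec_nonneg u
  have hSu := (hS.dotProduct_mulVec_zero_iff u).mp (by linarith)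
  have hDu := (hD.dotProduct_mulVec_zero_iff u).mp (by linarith)
  rw [mul_kerProj_mul_transpose hA, conjTranspose_mul_self_mulVec_eq_zero, ← mulVec_mulVec] at hSu
  obtain ⟨c, hc⟩ := eq_transpose_mulVec_of_kerProj_mulVec_eq_zero hSu
  refine eq_zero_of_transpose_mulVec_eq hAB (fun j hj => ?_) hc
  have hDj := congrFun hDu j
  rw [mulVec_diagonal, Pi.zero_apply, neg_mul, neg_eq_zero] at hDj
  exact (mul_eq_zero.mp hDj).resolve_left hj

theorem inv_mul_mul_kerProj_mulVec_eq_neg [Fintype k] [DecidableEq k] {A : Matrix m n ℝ}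
    {B : Matrix k n ℝ} {d : k → ℝ} (hA : IsUnit (A * Aᵀ).det)
    (hQ : IsUnit (B * kerProj A * Bᵀ - diagonal d).det) {y : n → ℝ} {lam : m → ℝ} {mu : k → ℝ}
    (hy : y + Aᵀ *ᵥ lam + Bᵀ *ᵥ mu = 0) (hdmu : diagonal d *ᵥ mu = 0) :
    ((B * kerProj A * Bᵀ - diagonal d)⁻¹ * B * kerProj A) *ᵥ y = -mu := by
  have hy' : y = -(Aᵀ *ᵥ lam) - Bᵀ *ᵥ mu := by linear_combination hy
  have hBy : (B * kerProj A) *ᵥ y = -((B * kerProj A * Bᵀ - diagonal d) *ᵥ mu) := by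
    rw [hy', mulVec_sub, mulVec_neg, mulVec_mulVec, mulVec_mulVec, Matrix.mul_assoc B,
      kerProj_mul_transpose hA, Matrix.mul_zero, zero_mulVec, sub_mulVec, hdmu, neg_zero,
      zero_sub, sub_zero]
  rw [Matrix.mul_assoc, ← mulVec_mulVec, hBy, mulVec_neg, mulVec_mulVec, nonsing_inv_mul _ hQ,
    one_mulVec]

end Matrix

theorem diagonal_mulVec_eq_zero_of_dotProduct_eq_zero {ι : Type*} [Fintype ι] [DecidableEq ι]
    {mu d : ι → ℝ} (hmu : ∀ j, 0 ≤ mu j) (hd : ∀ j, d j ≤ 0) (h : mu ⬝ᵥ d = 0) :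
    diagonal d *ᵥ mu = 0 := by
  have hterms := (Finset.sum_eq_zero_iff_of_nonpos fun j _ =>
    mul_nonpos_of_nonneg_of_nonpos (hmu j) (hd j)).mp h
  funext j
  rw [mulVec_diagonal, mul_comm]
  exact hterms j (Finset.mem_univ j)

theorem stmt_12_general
    {n m k : ℕ}
    (θ : (Fin n → ℝ) → ℝ) (h : Fin m → (Fin n → ℝ) → ℝ) (g : Fin k → (Fin n → ℝ) → ℝ)
    (hH2 : hypH2 h g)
    (x : Fin n → ℝ) (hx : x ∈ feas h g)
    (lam : Fin m → ℝ) (mu : Fin k → ℝ) (hmu : ∀ j, 0 ≤ mu j)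
    (heq : grad θ x + (matA h x)ᵀ.mulVec lam + (matB g x)ᵀ.mulVec mu = 0)
    (hcomp : mu ⬝ᵥ (fun j => g j x) = 0) :
    (Matrix.diagonal fun j => g j x).mulVec mu = 0 ∧
    vecv θ h g x = -mu ∧
    pPart (vecv θ h g x) = 0 := by
  have hslack : (diagonal fun j => g j x) *ᵥ mu = 0 :=
    diagonal_mulVec_eq_zero_of_dotProduct_eq_zero hmu hx.2 hcomp
  have hA : IsUnit (matA h x * (matA h x)ᵀ).det :=
    isUnit_det_mul_transpose_of_linearIndependent ((hH2 x hx).comp Sum.inl Sum.inl_injective)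
  have hQ : IsUnit (matQ h g x).det := (isUnit_iff_isUnit_det _).mp
    (posDef_mul_kerProj_mul_transpose_sub_diagonal hx.2 (hH2 x hx)).isUnit
  have hv : vecv θ h g x = -mu := inv_mul_mul_kerProj_mulVec_eq_neg hA hQ heq hslack
  exact ⟨hslack, hv, hv ▸ funext fun j => max_eq_left (neg_nonpos.mpr (hmu j))⟩

/-- Multiplier identity at KKT points: if `x ∈ S` and `λ, μ` with `μ ≥ 0` satisfy
`(∇θ(x))ᵀ + A(x)ᵀλ + B(x)ᵀμ = 0` and `μᵀg(x) = 0`, then `diag(g(x))μ = 0`,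
`v(x) = −μ` and `(v(x))⁺ = 0`. -/
theorem stmt_12
    {n m k : ℕ} (hmn : m < n)
    (θ : (Fin n → ℝ) → ℝ) (h : Fin m → (Fin n → ℝ) → ℝ) (g : Fin k → (Fin n → ℝ) → ℝ)
    (hθ : ContDiff ℝ 2 θ) (hhC : ∀ i, ContDiff ℝ 2 (h i)) (hgC : ∀ j, ContDiff ℝ 2 (g j))
    (hH1 : hypH1 θ h g) (hH2 : hypH2 h g)
    (x : Fin n → ℝ) (hx : x ∈ feas h g)
    (lam : Fin m → ℝ) (mu : Fin k → ℝ) (hmu : ∀ j, 0 ≤ mu j)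
    (heq : grad θ x + (matA h x)ᵀ.mulVec lam + (matB g x)ᵀ.mulVec mu = 0)
    (hcomp : mu ⬝ᵥ (fun j => g j x) = 0) :
    (Matrix.diagonal fun j => g j x).mulVec mu = 0 ∧
    vecv θ h g x = -mu ∧
    pPart (vecv θ h g x) = 0 :=
  stmt_12_general θ h g hH2 x hx lam mu hmu heq hcomp
end
end

section
/- Contingent-cone property at active constraints (Remark 2.5): Under assumptions (H1) and (H2), if x ∈ S and j ∈ {1,…,k} satisfies g_j(x) = 0, then ∇g_j(x)F(x) = −(b_j(x) + c_j(x)(max(0, v_j(x)))^{2p_j}) · max(0, v_j(x)); in particular ∇g_j(x)F(x) ≤ 0 for every active constraint j. -/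
open Matrix Set Filter

noncomputable section

/-
Once `Q(x)` is known to be invertible, the identity is pure matrix algebra. Writing
`D = diag(g(x))`, the definition `Q = BHBᵀ - D` together with the symmetry of `H` and `Q`
gives `B Pᵀ = I + D Q⁻¹` and `B (H - PᵀQP) = -D P`. Hence every term of `B F(x)` other than
`-R₃ v⁺` lies in the range of `D`, whose `j`-th row vanishes when `g_j(x) = 0`.

`Q(x)` is positive definite: since `H` is a symmetric idempotent,
`zᵀQz = |HBᵀz|² - Σ g_j(x) z_j²`, and if this vanishes then `z` is supported on the active
constraints and `Bᵀz` lies in the range of `Aᵀ`, which (H2) rules out unless `z = 0`.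
-/

namespace Matrix

theorem eq_zero_of_transpose_mulVec_eq_transpose_mulVec {R k m n : Type*} [CommRing R]
    [Fintype k] [Fintype m] {A : Matrix m n R} {B : Matrix k n R}
    {d : k → R} (hli : LinearIndependent R (Sum.elim A.row fun j : {j // d j = 0} => B j))
    {z : k → R} (hz : ∀ j, d j ≠ 0 → z j = 0) {w : m → R} (hBA : Bᵀ *ᵥ z = Aᵀ *ᵥ w) :
    z = 0 := by
  classical
  have hinactive : ∑ j : {j // ¬d j = 0}, z j • B j = 0 :=
    Finset.sum_eq_zero fun j _ => by rw [hz j j.2, zero_smul]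
  have hactive : ∑ j : {j // d j = 0}, z j • B j = ∑ i, w i • A i := by
    rw [← add_zero (∑ j : {j // d j = 0}, z j • B j), ← hinactive,
      Fintype.sum_subtype_add_sum_subtype (fun j => d j = 0) (fun j => z j • B j),
      ← vecMul_eq_sum, ← mulVec_transpose, hBA, mulVec_transpose, vecMul_eq_sum]
  have hcomb : ∑ i, Sum.elim (-w) (fun j : {j // d j = 0} => z j) i •
      Sum.elim A.row (fun j : {j // d j = 0} => B j) i = 0 := by
    simp only [Fintype.sum_sum_type, Sum.elim_inl, Sum.elim_inr, Pi.neg_apply, neg_smul,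
      Finset.sum_neg_distrib, hactive]
    exact neg_add_cancel _
  have hcoeff := Fintype.linearIndependent_iff.mp hli _ hcomb
  funext j
  by_cases hj : d j = 0
  · exact hcoeff (Sum.inr ⟨j, hj⟩)
  · exact hz j hj

section Algebra

variable {R : Type*} [CommRing R] {k m n : Type*} [Fintype k] [Fintype m] [Fintype n]

theorem transpose_one_sub_transpose_mul_inv_mul [DecidableEq m] [DecidableEq n]
    (A : Matrix m n R) : (1 - Aᵀ * (A * Aᵀ)⁻¹ * A)ᵀ = 1 - Aᵀ * (A * Aᵀ)⁻¹ * A := by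
  simp only [transpose_sub, transpose_one, transpose_mul, transpose_nonsing_inv,
    transpose_transpose, Matrix.mul_assoc]

theorem isIdempotentElem_transpose_mul_inv_mul [DecidableEq m] {A : Matrix m n R}
    (hA : IsUnit (A * Aᵀ).det) : IsIdempotentElem (Aᵀ * (A * Aᵀ)⁻¹ * A) := by
  have hinv : A * Aᵀ * (A * Aᵀ)⁻¹ = 1 := mul_nonsing_inv _ hA
  calc Aᵀ * (A * Aᵀ)⁻¹ * A * (Aᵀ * (A * Aᵀ)⁻¹ * A)
      = Aᵀ * (A * Aᵀ)⁻¹ * (A * Aᵀ * (A * Aᵀ)⁻¹) * A := by simp only [Matrix.mul_assoc]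
    _ = Aᵀ * (A * Aᵀ)⁻¹ * A := by rw [hinv, Matrix.mul_one]

variable [DecidableEq k] {B : Matrix k n R} {H : Matrix n n R} {d : k → R} {Q : Matrix k k R}

theorem mul_transpose_inv_mul_mul (hH : Hᵀ = H) (hQ : Q = B * H * Bᵀ - diagonal d)
    (hQu : IsUnit Q.det) : B * (Q⁻¹ * B * H)ᵀ = 1 + diagonal d * Q⁻¹ := by
  have hQt : Qᵀ = Q := by
    rw [hQ, transpose_sub, transpose_mul, transpose_mul, hH, diagonal_transpose,
      transpose_transpose, Matrix.mul_assoc]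
  calc B * (Q⁻¹ * B * H)ᵀ = (Q + diagonal d) * Q⁻¹ := by
        rw [transpose_mul, transpose_mul, transpose_nonsing_inv, hQt, hH, hQ, sub_add_cancel,
          ← hQ]
        simp only [Matrix.mul_assoc]
    _ = 1 + diagonal d * Q⁻¹ := by rw [Matrix.add_mul, mul_nonsing_inv _ hQu]

theorem mul_sub_transpose_mul_mul (hH : Hᵀ = H) (hQ : Q = B * H * Bᵀ - diagonal d)
    (hQu : IsUnit Q.det) :
    B * (H - (Q⁻¹ * B * H)ᵀ * Q * (Q⁻¹ * B * H)) = -(diagonal d * (Q⁻¹ * B * H)) := by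
  have hQP : Q * (Q⁻¹ * B * H) = B * H := by
    rw [← Matrix.mul_assoc, ← Matrix.mul_assoc, mul_nonsing_inv _ hQu, Matrix.one_mul]
  rw [Matrix.mul_sub, Matrix.mul_assoc _ Q, ← Matrix.mul_assoc B, hQP,
    mul_transpose_inv_mul_mul hH hQ hQu, Matrix.add_mul, Matrix.one_mul]
  simp only [Matrix.mul_assoc]
  abel

theorem mulVec_transpose_inv_mul_mul_mulVec_apply (hH : Hᵀ = H)
    (hQ : Q = B * H * Bᵀ - diagonal d) (hQu : IsUnit Q.det) {j : k} (hj : d j = 0)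
    (y : k → R) : (B *ᵥ ((Q⁻¹ * B * H)ᵀ *ᵥ y)) j = y j := by
  rw [mulVec_mulVec, mul_transpose_inv_mul_mul hH hQ hQu, add_mulVec, one_mulVec,
    ← mulVec_mulVec, Pi.add_apply, mulVec_diagonal, hj, zero_mul, add_zero]

theorem mulVec_sub_transpose_mul_mul_mulVec_apply (hH : Hᵀ = H)
    (hQ : Q = B * H * Bᵀ - diagonal d) (hQu : IsUnit Q.det) {j : k} (hj : d j = 0)
    (y : n → R) : (B *ᵥ ((H - (Q⁻¹ * B * H)ᵀ * Q * (Q⁻¹ * B * H)) *ᵥ y)) j = 0 := by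
  rw [mulVec_mulVec, mul_sub_transpose_mul_mul hH hQ hQu, neg_mulVec, ← mulVec_mulVec,
    Pi.neg_apply, mulVec_diagonal, hj, zero_mul, neg_zero]

end Algebra

section PosDef

variable {k m n : Type*} [Fintype k] [Fintype m] [Fintype n]

theorem posDef_mul_transpose_self {A : Matrix m n ℝ} (hA : LinearIndependent ℝ A.row) :
    (A * Aᵀ).PosDef := by
  simpa only [conjTranspose_eq_transpose_of_trivial] using
    PosDef.mul_conjTranspose_self A (vecMul_injective_iff.mpr hA)

theorem dotProduct_mulVec_mul_mul_transpose_sub_diagonal [DecidableEq k] {B : Matrix k n ℝ}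
    {H : Matrix n n ℝ} (hH : Hᵀ = H) (hHH : IsIdempotentElem H) (d : k → ℝ) (z : k → ℝ) :
    star z ⬝ᵥ ((B * H * Bᵀ - diagonal d) *ᵥ z) =
      (H *ᵥ (Bᵀ *ᵥ z)) ⬝ᵥ (H *ᵥ (Bᵀ *ᵥ z)) + ∑ j, -d j * z j ^ 2 := by
  have hgram : B * H * Bᵀ = (H * Bᵀ)ᵀ * (H * Bᵀ) := by
    rw [transpose_mul, hH, transpose_transpose, ← Matrix.mul_assoc, Matrix.mul_assoc B H H,
      hHH.eq]
  rw [star_trivial, hgram, sub_mulVec, dotProduct_sub, ← mulVec_mulVec, dotProduct_mulVec,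
    vecMul_transpose, ← mulVec_mulVec, sub_eq_add_neg]
  simp only [dotProduct, mulVec_diagonal, ← Finset.sum_neg_distrib]
  exact congrArg _ (Finset.sum_congr rfl fun j _ => by ring)

theorem posDef_mul_mul_transpose_sub_diagonal [DecidableEq k] [DecidableEq m] [DecidableEq n]
    {A : Matrix m n ℝ} {B : Matrix k n ℝ} {d : k → ℝ} (hd : ∀ j, d j ≤ 0)
    (hli : LinearIndependent ℝ (Sum.elim A.row fun j : {j // d j = 0} => B j)) :
    (B * (1 - Aᵀ * (A * Aᵀ)⁻¹ * A) * Bᵀ - diagonal d).PosDef := by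
  set H := 1 - Aᵀ * (A * Aᵀ)⁻¹ * A with hHdef
  have hAA : IsUnit (A * Aᵀ).det := (isUnit_iff_isUnit_det _).mp
    (posDef_mul_transpose_self (hli.comp Sum.inl Sum.inl_injective)).isUnit
  have hH : Hᵀ = H := transpose_one_sub_transpose_mul_inv_mul A
  have hHH : IsIdempotentElem H := (isIdempotentElem_transpose_mul_inv_mul hAA).one_sub
  have hsymm : (B * H * Bᵀ - diagonal d)ᵀ = B * H * Bᵀ - diagonal d := by
    rw [transpose_sub, transpose_mul, transpose_mul, hH, diagonal_transpose,
      transpose_transpose, Matrix.mul_assoc]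
  refine PosDef.of_dotProduct_mulVec_pos (by simpa [IsHermitian] using hsymm) fun z hz => ?_
  rw [dotProduct_mulVec_mul_mul_transpose_sub_diagonal hH hHH]
  have hterm : ∀ j ∈ Finset.univ, 0 ≤ -d j * z j ^ 2 := fun j _ =>
    mul_nonneg (neg_nonneg.mpr (hd j)) (sq_nonneg _)
  refine lt_of_le_of_ne (add_nonneg (dotProduct_self_star_nonneg _) (Finset.sum_nonneg hterm))
    fun hzero => hz ?_
  obtain ⟨hproj, hdiag⟩ := (add_eq_zero_iff_of_nonneg (dotProduct_self_star_nonneg _)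
    (Finset.sum_nonneg hterm)).mp hzero.symm
  have hsupp : ∀ j, d j ≠ 0 → z j = 0 := fun j hj => by
    simpa [hj] using (Finset.sum_eq_zero_iff_of_nonneg hterm).mp hdiag j (Finset.mem_univ j)
  -- `H u = 0` says exactly that `u = Aᵀ w` with `w = (A Aᵀ)⁻¹ A u`
  refine eq_zero_of_transpose_mulVec_eq_transpose_mulVec hli hsupp
    (w := ((A * Aᵀ)⁻¹ * A) *ᵥ (Bᵀ *ᵥ z)) ?_
  have hu := dotProduct_self_eq_zero.mp hproj
  rw [hHdef, sub_mulVec, one_mulVec, sub_eq_zero] at hu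
  rw [mulVec_mulVec _ Aᵀ, ← Matrix.mul_assoc]
  exact hu

end PosDef

end Matrix

open Matrix

theorem posDef_matQ {n m k : ℕ} {h : Fin m → (Fin n → ℝ) → ℝ} {g : Fin k → (Fin n → ℝ) → ℝ}
    (hH2 : hypH2 h g) {x : Fin n → ℝ} (hx : x ∈ feas h g) : (matQ h g x).PosDef :=
  posDef_mul_mul_transpose_sub_diagonal hx.2 (hH2 x hx)

theorem grad_dotProduct_vecF_of_active {n m k : ℕ} (θ : (Fin n → ℝ) → ℝ)
    {h : Fin m → (Fin n → ℝ) → ℝ} {g : Fin k → (Fin n → ℝ) → ℝ}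
    (R1 : (Fin n → ℝ) → Matrix (Fin n) (Fin n) ℝ) (R2 : (Fin n → ℝ) → Matrix (Fin k) (Fin k) ℝ)
    (a b c : Fin k → (Fin n → ℝ) → ℝ) (p : Fin k → ℕ) {x : Fin n → ℝ}
    (hQu : IsUnit (matQ h g x).det) {j : Fin k} (hj : g j x = 0) :
    grad (g j) x ⬝ᵥ vecF θ h g R1 R2 a b c p x =
      -((b j x + c j x * (max 0 (vecv θ h g x j)) ^ (2 * p j)) * max 0 (vecv θ h g x j)) := by
  have hH : (matH h x)ᵀ = matH h x := transpose_one_sub_transpose_mul_inv_mul _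
  change (matB g x *ᵥ vecF θ h g R1 R2 a b c p x) j = _
  rw [vecF, mulVec_sub, mulVec_sub, mulVec_neg, Pi.sub_apply, Pi.sub_apply, Pi.neg_apply]
  set P := matP h g x
  set M := matH h x - Pᵀ * matQ h g x * P
  have hrowP : ∀ y, (matB g x *ᵥ (Pᵀ *ᵥ y)) j = y j :=
    mulVec_transpose_inv_mul_mul_mulVec_apply hH rfl hQu hj
  have hrowM : ∀ y, (matB g x *ᵥ (M *ᵥ y)) j = 0 :=
    mulVec_sub_transpose_mul_mul_mulVec_apply hH rfl hQu hj
  rw [Matrix.mul_assoc M, ← mulVec_mulVec, hrowM, Matrix.mul_assoc Pᵀ, ← mulVec_mulVec, hrowP,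
    ← mulVec_mulVec, mulVec_diagonal, hj, zero_mul, ← mulVec_mulVec, hrowP, matR3,
    mulVec_diagonal]
  simp only [pPart]
  ring

theorem stmt_13_general
    {n m k : ℕ}
    (θ : (Fin n → ℝ) → ℝ) (h : Fin m → (Fin n → ℝ) → ℝ) (g : Fin k → (Fin n → ℝ) → ℝ)
    (hH2 : hypH2 h g)
    (R1 : (Fin n → ℝ) → Matrix (Fin n) (Fin n) ℝ)
    (R2 : (Fin n → ℝ) → Matrix (Fin k) (Fin k) ℝ)
    (a b c : Fin k → (Fin n → ℝ) → ℝ) (p : Fin k → ℕ)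
    (hb0 : ∀ j x, 0 ≤ b j x) (hc0 : ∀ j x, 0 ≤ c j x) :
    ∀ x ∈ feas h g, ∀ j : Fin k, g j x = 0 →
      grad (g j) x ⬝ᵥ vecF θ h g R1 R2 a b c p x =
        -((b j x + c j x * (max 0 (vecv θ h g x j)) ^ (2 * p j)) *
            max 0 (vecv θ h g x j)) ∧
      grad (g j) x ⬝ᵥ vecF θ h g R1 R2 a b c p x ≤ 0 := by
  intro x hx j hj
  have hQu : IsUnit (matQ h g x).det :=
    (isUnit_iff_isUnit_det _).mp (posDef_matQ hH2 hx).isUnit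
  have hF := grad_dotProduct_vecF_of_active θ R1 R2 a b c p hQu hj
  have hv : 0 ≤ max 0 (vecv θ h g x j) := le_max_left _ _
  exact ⟨hF, hF ▸ neg_nonpos.mpr
    (mul_nonneg (add_nonneg (hb0 j x) (mul_nonneg (hc0 j x) (pow_nonneg hv _))) hv)⟩

/-- Contingent-cone property at active constraints (Remark 2.5): if `x ∈ S` and
`gⱼ(x) = 0` then `∇gⱼ(x)F(x) = −(bⱼ(x) + cⱼ(x)(max(0,vⱼ(x)))^{2pⱼ}) max(0,vⱼ(x)) ≤ 0`. -/
theorem stmt_13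
    {n m k : ℕ} (hmn : m < n)
    (θ : (Fin n → ℝ) → ℝ) (h : Fin m → (Fin n → ℝ) → ℝ) (g : Fin k → (Fin n → ℝ) → ℝ)
    (hθ : ContDiff ℝ 2 θ) (hhC : ∀ i, ContDiff ℝ 2 (h i)) (hgC : ∀ j, ContDiff ℝ 2 (g j))
    (hH1 : hypH1 θ h g) (hH2 : hypH2 h g)
    (R1 : (Fin n → ℝ) → Matrix (Fin n) (Fin n) ℝ)
    (R2 : (Fin n → ℝ) → Matrix (Fin k) (Fin k) ℝ)
    (a b c : Fin k → (Fin n → ℝ) → ℝ) (p : Fin k → ℕ)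
    (hR1C : ∀ i j, ContDiff ℝ 1 fun x => R1 x i j)
    (hR1pd : ∀ x, (R1 x).PosDef)
    (hR2C : ∀ i j, ContDiff ℝ 1 fun x => R2 x i j)
    (hR2psd : ∀ x, (R2 x).PosSemidef)
    (haC : ∀ j, ContDiff ℝ 1 (a j)) (hbC : ∀ j, ContDiff ℝ 1 (b j))
    (hcC : ∀ j, ContDiff ℝ 1 (c j))
    (ha0 : ∀ j x, 0 ≤ a j x) (hb0 : ∀ j x, 0 ≤ b j x) (hc0 : ∀ j x, 0 ≤ c j x)
    (hbc : ∀ x ∈ feas h g, ∀ j, 0 < b j x + c j x)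
    (hpd : ∀ x ∈ feas h g, (R2 x).PosDef ∨ (Matrix.diagonal fun j => a j x).PosDef)
    (hp : ∀ j, 1 ≤ p j) :
    ∀ x ∈ feas h g, ∀ j : Fin k, g j x = 0 →
      grad (g j) x ⬝ᵥ vecF θ h g R1 R2 a b c p x =
        -((b j x + c j x * (max 0 (vecv θ h g x j)) ^ (2 * p j)) *
            max 0 (vecv θ h g x j)) ∧
      grad (g j) x ⬝ᵥ vecF θ h g R1 R2 a b c p x ≤ 0 :=
  stmt_13_general θ h g hH2 R1 R2 a b c p hb0 hc0

end
end
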